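/- The closure of the set D_f of finite persistence diagrams in (D^∞, OT_∞) is exactly D₀^∞, the set of persistence diagrams having, for every r > 0, only finitely many points at distance greater than r from the diagonal. -/

import Mathlib

noncomputable section

open MeasureTheory Metric Set Filter Topology ENNReal
open scoped Classical

/-- The plane with the Euclidean distance. -/
abbrev Pt : Type := EuclideanSpace ℝ (Fin 2)

/-- Build a point of the plane from coordinates. -/
def mk2 (a b : ℝ) : Pt := (WithLp.equiv 2 (Fin 2 → ℝ)).symm ![a, b]

/-- The open upper half-plane Ω = {(t₁,t₂) : t₂ > t₁}. -/
def UHP : Set Pt := {x | x 0 < x 1}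

/-- The diagonal ∂Ω = {(t,t)}. -/
def Diag : Set Pt := {x | x 0 = x 1}

/-- Ω̄ = Ω ∪ ∂Ω. -/
def UHPbar : Set Pt := UHP ∪ Diag

/-- Distance from a point to the diagonal. -/
def persDist (x : Pt) : ℝ := infDist x Diag

/-- p-th total persistence Pers_p(μ) = ∫_Ω d(x,∂Ω)^p dμ(x). -/
def Pers (p : ℝ) (μ : Measure Pt) : ℝ≥0∞ :=
  ∫⁻ x in UHP, ENNReal.ofReal (persDist x ^ p) ∂μ

/-- μ ∈ M^p : a measure supported on Ω with finite p-th persistence. -/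
def MemMp (p : ℝ) (μ : Measure Pt) : Prop := μ UHPᶜ = 0 ∧ Pers p μ < ⊤

/-- Admissible partial transport plans between μ and ν: measures on Ω̄ × Ω̄ whose
marginals restricted to Ω are μ and ν. -/
def Adm (μ ν : Measure Pt) : Set (Measure (Pt × Pt)) :=
  {π | π ((UHPbar ×ˢ UHPbar)ᶜ) = 0 ∧
    (∀ A : Set Pt, MeasurableSet A → A ⊆ UHP → π (A ×ˢ univ) = μ A) ∧
    (∀ B : Set Pt, MeasurableSet B → B ⊆ UHP → π (univ ×ˢ B) = ν B)}

/-- Cost C_p(π) = ∬ d(x,y)^p dπ(x,y). -/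
def Cost (p : ℝ) (π : Measure (Pt × Pt)) : ℝ≥0∞ :=
  ∫⁻ z, ENNReal.ofReal (dist z.1 z.2 ^ p) ∂π

/-- OT_p(μ,ν)^p, as an extended real. -/
def OTe (p : ℝ) (μ ν : Measure Pt) : ℝ≥0∞ := ⨅ π ∈ Adm μ ν, Cost p π

/-- The optimal partial transport distance OT_p(μ,ν). -/
def OT (p : ℝ) (μ ν : Measure Pt) : ℝ := (OTe p μ ν ^ (1 / p)).toReal

/-- Optimal plans. -/
def OptSet (p : ℝ) (μ ν : Measure Pt) : Set (Measure (Pt × Pt)) :=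
  {π | π ∈ Adm μ ν ∧ Cost p π = OTe p μ ν}

/-- Vague convergence of measures on Ω: convergence of integrals of continuous
functions compactly supported in Ω. -/
def VagueTendsto (μs : ℕ → Measure Pt) (μ : Measure Pt) : Prop :=
  ∀ f : Pt → ℝ, Continuous f → HasCompactSupport f → tsupport f ⊆ UHP →
    Tendsto (fun n => ∫ x, f x ∂(μs n)) atTop (𝓝 (∫ x, f x ∂μ))

/-- E_Ω = (Ω̄ × Ω̄) \ (∂Ω × ∂Ω). -/
def EOm : Set (Pt × Pt) := (UHPbar ×ˢ UHPbar) \ (Diag ×ˢ Diag)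

/-- Vague convergence of plans on E_Ω. -/
def VaguePlanTendsto (πs : ℕ → Measure (Pt × Pt)) (π : Measure (Pt × Pt)) : Prop :=
  ∀ f : Pt × Pt → ℝ, Continuous f → HasCompactSupport f → tsupport f ⊆ EOm →
    Tendsto (fun n => ∫ z, f z ∂(πs n)) atTop (𝓝 (∫ z, f z ∂π))

/-- A persistence diagram: an ℕ-valued point measure Σ_{x ∈ X} n_x δ_x with
X ⊆ Ω locally finite in Ω. -/
def IsDiagram (μ : Measure Pt) : Prop :=
  ∃ (X : Set Pt) (n : Pt → ℕ), X ⊆ UHP ∧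
    (∀ x ∈ UHP, ∃ U ∈ 𝓝 x, (X ∩ U).Finite) ∧
    μ = Measure.sum (fun x : X => (n x.1 : ℝ≥0∞) • Measure.dirac (x.1 : Pt))

/-- Support of a measure on Pt × Pt. -/
def msupp (π : Measure (Pt × Pt)) : Set (Pt × Pt) := {z | ∀ U ∈ 𝓝 z, π U ≠ 0}

/-- Support of a measure on Pt. -/
def suppM (μ : Measure Pt) : Set Pt := {x | ∀ U ∈ 𝓝 x, μ U ≠ 0}

/-- Bottleneck cost of a plan: sup of d(x,y) over the support. -/
def CostInf (π : Measure (Pt × Pt)) : ℝ≥0∞ :=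
  ⨆ z ∈ msupp π, ENNReal.ofReal (dist z.1 z.2)

/-- The bottleneck (∞) optimal partial transport distance, as extended real. -/
def OTinfE (μ ν : Measure Pt) : ℝ≥0∞ := ⨅ π ∈ Adm μ ν, CostInf π

/-- μ ∈ M^∞ : support at bounded distance from the diagonal. -/
def MemMinf (μ : Measure Pt) : Prop :=
  μ UHPᶜ = 0 ∧ ∃ C : ℝ, ∀ x ∈ suppM μ, persDist x ≤ C

/-- A partial matching between two indexed families: a bijection between
subsets of the index sets; unmatched points are sent to the diagonal. -/
structure Matching (ι κ : Type*) where
  I : Set ι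
  J : Set κ
  e : I ≃ J

/-- Cost of a partial matching for d_p (as the p-th power, extended real). -/
def mCost (p : ℝ) {ι κ : Type*} (x : ι → Pt) (y : κ → Pt) (m : Matching ι κ) : ℝ≥0∞ :=
  (∑' i : m.I, ENNReal.ofReal (dist (x i.1) (y (m.e i).1) ^ p))
  + (∑' i : ↥(m.Iᶜ), ENNReal.ofReal (persDist (x i.1) ^ p))
  + (∑' j : ↥(m.Jᶜ), ENNReal.ofReal (persDist (y j.1) ^ p))

/-- Bottleneck cost of a partial matching. -/
def mCostInf {ι κ : Type*} (x : ι → Pt) (y : κ → Pt) (m : Matching ι κ) : ℝ≥0∞ :=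
  (⨆ i : m.I, ENNReal.ofReal (dist (x i.1) (y (m.e i).1)))
  ⊔ (⨆ i : ↥(m.Iᶜ), ENNReal.ofReal (persDist (x i.1)))
  ⊔ (⨆ j : ↥(m.Jᶜ), ENNReal.ofReal (persDist (y j.1)))

/-- The point measure associated to an indexed family of points. -/
def famMeasure {ι : Type*} (x : ι → Pt) : Measure Pt :=
  Measure.sum (fun i => Measure.dirac (x i))

/-- The weighted measure μ^p, with density d(x,∂Ω)^p with respect to μ. -/
def wgt (p : ℝ) (μ : Measure Pt) : Measure Pt :=
  μ.withDensity (fun x => ENNReal.ofReal (persDist x ^ p))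

/-- The quotient space Ω̃ = Ω ⊔ {∂Ω}. -/
def Qt : Type := Option ↥UHP

/-- The quotient metric ρ on Ω̃. -/
def ρQ : Qt → Qt → ℝ
  | some x, some y => min (dist (x : Pt) (y : Pt)) (persDist x + persDist y)
  | some x, none => persDist x
  | none, some y => persDist y
  | none, none => 0

/-- The quotient metric ρ viewed on the plane, all diagonal points being
identified. -/
def ρP (x y : Pt) : ℝ :=
  if x ∈ Diag then (if y ∈ Diag then 0 else persDist y)
  else if y ∈ Diag then persDist x
  else min (dist x y) (persDist x + persDist y)

/-- Couplings with full (equal-mass) marginals. -/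
def Coup (μ ν : Measure Pt) : Set (Measure (Pt × Pt)) :=
  {π | π.map Prod.fst = μ ∧ π.map Prod.snd = ν}

/-- The p-Wasserstein distance (to the p) for the quotient metric ρ. -/
def WpE (p : ℝ) (μ ν : Measure Pt) : ℝ≥0∞ :=
  ⨅ π ∈ Coup μ ν, ∫⁻ z, ENNReal.ofReal (ρP z.1 z.2 ^ p) ∂π


/-!
A plan whose bottleneck cost is below `δ` moves no point of its support by more than `δ`, so
it matches every point of `a` of persistence `> r` with a point of persistence `> r - δ` of the
other diagram; a finite diagram within `r / 2` of `a` therefore bounds the mass of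
`{r < persDist}`. Conversely, keeping the points of persistence `> ε` and pushing the others
vertically onto the diagonal is an admissible plan of bottleneck cost at most `2 ε`, and it
connects `a` to its restriction to `{ε < persDist}`, which is finite when `a ∈ D₀^∞`.
-/

lemma isOpen_UHP : IsOpen UHP :=
  isOpen_lt (PiLp.continuous_apply 2 _ 0) (PiLp.continuous_apply 2 _ 1)

lemma isClosed_Diag : IsClosed Diag :=
  isClosed_eq (PiLp.continuous_apply 2 _ 0) (PiLp.continuous_apply 2 _ 1)

lemma measurableSet_UHPbar : MeasurableSet UHPbar :=
  isOpen_UHP.measurableSet.union isClosed_Diag.measurableSet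

lemma measurableSet_persDist_gt (r : ℝ) : MeasurableSet {x | r < persDist x} :=
  (isOpen_lt continuous_const (continuous_infDist_pt _)).measurableSet

lemma mem_UHP_of_mem_UHPbar {x : Pt} (hx : x ∈ UHPbar) (hpos : 0 < persDist x) : x ∈ UHP :=
  hx.resolve_right fun hxD => hpos.ne' (infDist_zero_of_mem hxD)

lemma persDist_le_persDist_add_dist (x y : Pt) : persDist x ≤ persDist y + dist x y :=
  infDist_le_infDist_add_dist

lemma abs_sub_le_two_mul_persDist (x : Pt) : |x 0 - x 1| ≤ 2 * persDist x := by
  have hDiag : Diag.Nonempty := ⟨0, rfl⟩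
  suffices |x 0 - x 1| / 2 ≤ persDist x by linarith
  refine (le_infDist hDiag).2 fun y (hy : y 0 = y 1) => ?_
  have h0 := PiLp.dist_apply_le x y 0
  have h1 := PiLp.dist_apply_le x y 1
  rw [Real.dist_eq] at h0 h1
  have : |x 0 - x 1| ≤ |x 0 - y 0| + |x 1 - y 1| := by
    rw [show x 0 - x 1 = (x 0 - y 0) - (x 1 - y 1) by rw [hy]; ring]
    exact abs_sub _ _
  linarith

def diagProj (x : Pt) : Pt := mk2 (x 0) (x 0)

lemma diagProj_apply (x : Pt) (i : Fin 2) : diagProj x i = x 0 := by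
  fin_cases i <;> simp [diagProj, mk2]

lemma diagProj_mem_Diag (x : Pt) : diagProj x ∈ Diag := by
  simp only [Diag, mem_ofPred_eq, diagProj_apply]

lemma diagProj_notMem_UHP (x : Pt) : diagProj x ∉ UHP := by
  simp only [UHP, mem_ofPred_eq, diagProj_apply, lt_irrefl, not_false_eq_true]

lemma continuous_diagProj : Continuous diagProj :=
  (PiLp.continuous_toLp 2 _).comp
    (continuous_pi fun i => by fin_cases i <;> simpa using PiLp.continuous_apply 2 _ 0)

lemma dist_diagProj_le (x : Pt) : dist (diagProj x) x ≤ 2 * persDist x := by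
  refine le_trans ?_ (abs_sub_le_two_mul_persDist x)
  rw [EuclideanSpace.dist_eq, Fin.sum_univ_two, diagProj_apply, diagProj_apply, dist_self,
    Real.dist_eq, ← Real.sqrt_sq_eq_abs]
  simp

lemma msupp_eq_support (π : Measure (Pt × Pt)) : msupp π = π.support := by
  ext z
  simp only [msupp, mem_ofPred_eq, Measure.mem_support_iff_forall, pos_iff_ne_zero]

lemma dist_le_of_mem_support_of_CostInf_le {π : Measure (Pt × Pt)} {δ : ℝ} (hδ : 0 ≤ δ)
    (hcost : CostInf π ≤ ENNReal.ofReal δ) {z : Pt × Pt} (hz : z ∈ π.support) :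
    dist z.1 z.2 ≤ δ := by
  rw [← msupp_eq_support] at hz
  refine (ENNReal.ofReal_le_ofReal_iff hδ).1 (le_trans ?_ hcost)
  exact le_iSup₂ (f := fun (z : Pt × Pt) (_ : z ∈ msupp π) => ENNReal.ofReal (dist z.1 z.2))
    z hz

lemma CostInf_le_of_ae_dist_le {π : Measure (Pt × Pt)} {c : ℝ}
    (h : ∀ᵐ z ∂π, dist z.1 z.2 ≤ c) : CostInf π ≤ ENNReal.ofReal c := by
  have hclosed : IsClosed {z : Pt × Pt | dist z.1 z.2 ≤ c} :=
    isClosed_le (continuous_fst.dist continuous_snd) continuous_const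
  refine iSup₂_le fun z hz => ENNReal.ofReal_le_ofReal ?_
  rw [msupp_eq_support] at hz
  exact Measure.support_subset_of_isClosed hclosed h hz

lemma measure_persDist_gt_le_of_mem_Adm {μ ν : Measure Pt} {π : Measure (Pt × Pt)}
    (hπ : π ∈ Adm μ ν) (hν : ν UHPᶜ = 0) {r δ : ℝ} (hδ : 0 ≤ δ) (hδr : δ ≤ r)
    (hcost : CostInf π ≤ ENNReal.ofReal δ) :
    ν {y | r < persDist y} ≤ μ {x | r - δ < persDist x} := by
  obtain ⟨hπbar, hπμ, hπν⟩ := hπ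
  have hmatch : univ ×ˢ ({y | r < persDist y} ∩ UHP) ≤ᵐ[π]
      ({x | r - δ < persDist x} ∩ UHP) ×ˢ univ := by
    filter_upwards [Measure.support_mem_ae, mem_ae_iff.2 hπbar] with ⟨x, y⟩ hsupp hbar hmem
    obtain ⟨hx, -⟩ := hbar
    obtain ⟨-, hy, -⟩ := hmem
    have hxy : dist x y ≤ δ :=
      dist_le_of_mem_support_of_CostInf_le (z := (x, y)) hδ hcost hsupp
    have hpers : r - δ < persDist x := by
      have := persDist_le_persDist_add_dist y x
      rw [dist_comm] at this
      simp only [mem_ofPred_eq] at hy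
      linarith
    exact ⟨⟨hpers, mem_UHP_of_mem_UHPbar hx (by linarith)⟩, trivial⟩
  calc ν {y | r < persDist y}
      = ν ({y | r < persDist y} ∩ UHP) := (measure_inter_conull hν).symm
    _ = π (univ ×ˢ ({y | r < persDist y} ∩ UHP)) :=
      (hπν _ ((measurableSet_persDist_gt r).inter isOpen_UHP.measurableSet)
        inter_subset_right).symm
    _ ≤ π (({x | r - δ < persDist x} ∩ UHP) ×ˢ univ) := measure_mono_ae hmatch
    _ = μ ({x | r - δ < persDist x} ∩ UHP) :=
      hπμ _ ((measurableSet_persDist_gt _).inter isOpen_UHP.measurableSet) inter_subset_right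
    _ ≤ μ {x | r - δ < persDist x} := measure_mono inter_subset_left

lemma IsDiagram.restrict {μ : Measure Pt} (hμ : IsDiagram μ) {s : Set Pt}
    (hs : MeasurableSet s) : IsDiagram (μ.restrict s) := by
  obtain ⟨X, n, hXU, hloc, rfl⟩ := hμ
  refine ⟨X, fun x => if x ∈ s then n x else 0, hXU, hloc, ?_⟩
  rw [Measure.restrict_sum _ hs]
  congr 1
  funext x
  rw [Measure.restrict_smul, restrict_dirac' hs]
  by_cases hx : (x : Pt) ∈ s <;> simp [hx]

def truncPlan (T : Set Pt) (μ : Measure Pt) : Measure (Pt × Pt) :=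
  μ.map fun x => (T.piecewise id diagProj x, x)

lemma measurable_truncPlan_fun {T : Set Pt} (hT : MeasurableSet T) :
    Measurable fun x : Pt => (T.piecewise id diagProj x, x) :=
  (measurable_id.piecewise hT continuous_diagProj.measurable).prodMk measurable_id

lemma truncPlan_mem_Adm {T : Set Pt} (hT : MeasurableSet T) {μ : Measure Pt}
    (hμ : μ UHPᶜ = 0) : truncPlan T μ ∈ Adm (μ.restrict T) μ := by
  have hg := measurable_truncPlan_fun hT
  refine ⟨?_, fun A hA hAU => ?_, fun B hB _ => ?_⟩
  · rw [truncPlan, Measure.map_apply hg (measurableSet_UHPbar.prod measurableSet_UHPbar).compl]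
    refine measure_mono_null (fun x hx hxU => hx ⟨?_, Or.inl hxU⟩) hμ
    by_cases hxT : x ∈ T
    · simpa [hxT, UHPbar] using Or.inl hxU
    · simpa [hxT, UHPbar] using Or.inr (diagProj_mem_Diag x)
  · rw [truncPlan, Measure.map_apply hg (hA.prod MeasurableSet.univ), Measure.restrict_apply hA]
    congr 1
    ext x
    by_cases hxT : x ∈ T
    · simp [hxT]
    · simpa [hxT] using fun hx => diagProj_notMem_UHP x (hAU hx)
  · rw [truncPlan, Measure.map_apply hg (MeasurableSet.univ.prod hB)]
    congr 1
    ext x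
    simp

lemma CostInf_truncPlan_le {T : Set Pt} (hT : MeasurableSet T) (μ : Measure Pt) {ε : ℝ}
    (hε : 0 ≤ ε) (hTc : ∀ x ∉ T, persDist x ≤ ε) :
    CostInf (truncPlan T μ) ≤ ENNReal.ofReal (2 * ε) := by
  refine CostInf_le_of_ae_dist_le ((ae_map_iff (measurable_truncPlan_fun hT).aemeasurable
    (isClosed_le (continuous_fst.dist continuous_snd) continuous_const).measurableSet).2
    (Eventually.of_forall fun x => ?_))
  by_cases hxT : x ∈ T
  · simpa [hxT] using hε
  · have hx := hTc x hxT
    simpa [hxT] using (dist_diagProj_le x).trans (by linarith)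

lemma OTinfE_restrict_persDist_gt_le {μ : Measure Pt} (hμ : μ UHPᶜ = 0) {ε : ℝ}
    (hε : 0 ≤ ε) :
    OTinfE (μ.restrict {x | ε < persDist x}) μ ≤ ENNReal.ofReal (2 * ε) :=
  (iInf₂_le _ (truncPlan_mem_Adm (measurableSet_persDist_gt ε) hμ)).trans
    (CostInf_truncPlan_le (measurableSet_persDist_gt ε) μ hε fun _ hx => le_of_not_gt hx)

/-- the closure of the set D_f of finite diagrams in (D^∞, OT_∞)
is D₀^∞, the set of diagrams with finitely many points of persistence > r for
every r > 0. -/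
theorem stmt16 (a : Measure Pt) (ha : IsDiagram a) (hb : MemMinf a) :
    (∃ as : ℕ → Measure Pt,
        (∀ n, IsDiagram (as n) ∧ as n univ < ⊤) ∧
        Tendsto (fun n => OTinfE (as n) a) atTop (𝓝 0)) ↔
      (∀ r : ℝ, 0 < r → a {x | r < persDist x} < ⊤) := by
  constructor
  · rintro ⟨as, has, hlim⟩ r hr
    obtain ⟨n, hn⟩ := (hlim.eventually_lt_const (ENNReal.ofReal_pos.2 (half_pos hr))).exists
    obtain ⟨π, hπ, hcost⟩ : ∃ π ∈ Adm (as n) a, CostInf π < ENNReal.ofReal (r / 2) := by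
      simpa only [OTinfE, iInf_lt_iff, exists_prop] using hn
    calc a {x | r < persDist x}
        ≤ as n {x | r - r / 2 < persDist x} :=
          measure_persDist_gt_le_of_mem_Adm hπ hb.1 (by positivity) (by linarith) hcost.le
      _ ≤ as n univ := measure_mono (subset_univ _)
      _ < ⊤ := (has n).2
  · intro hfin
    refine ⟨fun k => a.restrict {x | 1 / (k + 1 : ℝ) < persDist x}, fun k =>
      ⟨ha.restrict (measurableSet_persDist_gt _), ?_⟩, ?_⟩
    · rw [Measure.restrict_apply_univ]
      exact hfin _ Nat.one_div_pos_of_nat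
    · refine tendsto_of_tendsto_of_tendsto_of_le_of_le tendsto_const_nhds ?_ (fun _ => zero_le)
        fun k => OTinfE_restrict_persDist_gt_le hb.1 (by positivity)
      simpa using ENNReal.tendsto_ofReal
        ((tendsto_one_div_add_atTop_nhds_zero_nat).const_mul 2)
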